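/- arXiv:1602.07761 — 4 statements merged into one kernel-verified Lean document; each statement's English description precedes it below -/
import Mathlib

section
/- For m ≥ 0 with L - m even and m ≤ L, the number of non-negative ±1 paths of L steps from height 0 to height m equals ((m+1)/(L+1)) · binomial(L+1, (L-m)/2). -/
/-!
Deleting the last step of a path to height `m + 1` leaves a path to height `m` or `m + 2`, and a
path to height `0` comes from height `1`; so the path counts satisfy the ballot recurrence. The
closed form `(m + 1) / (L + 1) * C(L + 1, k)`, with `L = m + 2k`, satisfies the same recurrence by
Pascal's rule and `C(n, k + 1) (k + 1) = C(n, k) (n - k)`, and induction on `k` and then `m`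
identifies the two.
-/

/-- The path recurrence for the closed form, with denominators cleared and the endpoint height
shifted to `h = m + 1`; `h = 0` is the case of paths ending at height `0`. -/
lemma choose_ballot_recurrence (h k : ℕ) :
    (h + 2 * k + 3) * (h * (h + 2 * k + 2).choose (k + 1) + (h + 2) * (h + 2 * k + 2).choose k) =
      (h + 2 * k + 2) * ((h + 1) * (h + 2 * k + 3).choose (k + 1)) := by
  have hr := Nat.choose_succ_right_eq (h + 2 * k + 2) k
  rw [show h + 2 * k + 2 - k = h + k + 2 by omega] at hr
  rw [Nat.choose_succ_succ' (h + 2 * k + 2) k]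
  linear_combination 2 * hr.symm

def ballotPaths (L m : ℕ) : Set (Fin (L + 1) → ℕ) :=
  {p | p 0 = 0 ∧ p (Fin.last L) = m ∧
    ∀ i : Fin L, p i.succ = p i.castSucc + 1 ∨ p i.castSucc = p i.succ + 1}

namespace ballotPaths

variable {L m : ℕ}

lemma le_of_mem {p : Fin (L + 1) → ℕ} (hp : p ∈ ballotPaths L m) (i : Fin (L + 1)) :
    p i ≤ i := by
  induction i using Fin.induction with
  | zero => simp [hp.1]
  | succ j ih =>
    have := hp.2.2 j
    simp only [Fin.val_succ, Fin.val_castSucc] at ih ⊢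
    omega

lemma finite (L m : ℕ) : (ballotPaths L m).Finite :=
  (Set.Finite.pi fun _ => Set.finite_Iic L).subset fun _ hp i _ =>
    (le_of_mem hp i).trans (Nat.lt_succ_iff.mp i.isLt)

lemma eq_empty_of_lt (h : L < m) : ballotPaths L m = ∅ :=
  Set.eq_empty_of_forall_notMem fun p hp => by
    have := le_of_mem hp (Fin.last L)
    simp only [hp.2.1, Fin.val_last] at this
    omega

lemma zero_zero : ballotPaths 0 0 = {0} := by
  ext p
  simp [ballotPaths, funext_iff]

lemma succ_eq (L m : ℕ) : ballotPaths (L + 1) m =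
    (fun q => Fin.snoc (α := fun _ => ℕ) q m) ''
      {q | ∃ v, q ∈ ballotPaths L v ∧ (m = v + 1 ∨ v = m + 1)} := by
  ext p
  constructor
  · rintro ⟨h0, hlast, hstep⟩
    refine ⟨Fin.init p, ⟨_, ⟨h0, rfl, fun i => ?_⟩, ?_⟩, ?_⟩
    · simpa only [Fin.init, Fin.succ_castSucc] using hstep i.castSucc
    · simpa only [Fin.init, Fin.succ_last, hlast, eq_comm (a := m)] using hstep (Fin.last L)
    · rw [← hlast]
      exact Fin.snoc_init_self p
  · rintro ⟨q, ⟨v, ⟨h0, hlast, hstep⟩, hv⟩, rfl⟩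
    refine ⟨?_, Fin.snoc_last _ _, fun i => ?_⟩
    · simpa only [← Fin.castSucc_zero, Fin.snoc_castSucc] using h0
    · induction i using Fin.lastCases with
      | last => simp only [Fin.succ_last, Fin.snoc_last, Fin.snoc_castSucc, hlast]; omega
      | cast j => simpa only [Fin.succ_castSucc, Fin.snoc_castSucc] using hstep j

lemma ncard_succ_eq (L m : ℕ) : (ballotPaths (L + 1) m).ncard =
    {q | ∃ v, q ∈ ballotPaths L v ∧ (m = v + 1 ∨ v = m + 1)}.ncard := by
  rw [succ_eq]
  exact Set.ncard_image_of_injective _ ((Fin.snoc_injective2 (α := fun _ => ℕ)).left m)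

lemma ncard_succ_zero (L : ℕ) : (ballotPaths (L + 1) 0).ncard = (ballotPaths L 1).ncard := by
  rw [ncard_succ_eq]
  congr 1
  ext q
  simp

lemma ncard_succ_succ (L m : ℕ) : (ballotPaths (L + 1) (m + 1)).ncard =
    (ballotPaths L m).ncard + (ballotPaths L (m + 2)).ncard := by
  rw [ncard_succ_eq, ← Set.ncard_union_eq _ (finite L m) (finite L (m + 2))]
  · congr 1
    ext q
    simp [and_or_left, exists_or]
  · exact Set.disjoint_left.mpr fun q hm hm2 => by have := hm.2.1.symm.trans hm2.2.1; omega

lemma ncard_self : ∀ L, (ballotPaths L L).ncard = 1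
  | 0 => by rw [zero_zero, Set.ncard_singleton]
  | L + 1 => by rw [ncard_succ_succ, ncard_self L, eq_empty_of_lt (by omega), Set.ncard_empty]

end ballotPaths

open ballotPaths

lemma add_mul_ncard_ballotPaths (m k : ℕ) :
    (m + 2 * k + 1) * (ballotPaths (m + 2 * k) m).ncard = (m + 1) * (m + 2 * k + 1).choose k := by
  induction k generalizing m with
  | zero => simp [ncard_self]
  | succ k ihk =>
    induction m with
    | zero =>
      have ih := ihk 1
      have step := choose_ballot_recurrence 0 k
      rw [show 0 + 2 * (k + 1) = 1 + 2 * k + 1 by ring, ncard_succ_zero]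
      refine Nat.eq_of_mul_eq_mul_left (show 0 < 2 * k + 2 by omega) ?_
      ring_nf at ih step ⊢
      linear_combination (3 + k * 2) * ih + step
    | succ m ihm =>
      have ih₂ := ihk (m + 2)
      rw [show m + 2 + 2 * k = m + 2 * (k + 1) by ring] at ih₂
      have step := choose_ballot_recurrence (m + 1) k
      rw [show m + 1 + 2 * (k + 1) = m + 2 * (k + 1) + 1 by ring, ncard_succ_succ]
      refine Nat.eq_of_mul_eq_mul_left (show 0 < m + 2 * k + 3 by omega) ?_
      ring_nf at ihm ih₂ step ⊢
      linear_combination (m + 2 * k + 4) * (ihm + ih₂) + step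

theorem stmt4 (L m : ℕ) (hm : m ≤ L) (hpar : (L - m) % 2 = 0) :
    Nat.card {p : Fin (L + 1) → ℕ //
        p 0 = 0 ∧ p (Fin.last L) = m ∧
        ∀ i : Fin L, p i.succ = p i.castSucc + 1 ∨ p i.castSucc = p i.succ + 1} =
      (m + 1) * (L + 1).choose ((L - m) / 2) / (L + 1) := by
  obtain ⟨k, rfl⟩ : ∃ k, L = m + 2 * k := ⟨(L - m) / 2, by omega⟩
  rw [show (m + 2 * k - m) / 2 = k by omega, ← add_mul_ncard_ballotPaths,
    Nat.mul_div_cancel_left _ (Nat.succ_pos _)]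
  exact Nat.card_coe_set_eq (ballotPaths (m + 2 * k) m)
end

section
/- The Motzkin number M_{2n} (the number of Motzkin paths of length 2n) satisfies M_{2n} = (1/(2n+1)) Σ_{i=0}^{n} (2n+1)! / ((2n-2i)! · i! · (i+1)!). -/
/-!
Encode a Motzkin path of length `m` by its word of steps in `Option DyckStep`, a flat step being
`none`. Erasing the flat steps (`List.reduceOption`) leaves a Dyck word, and conversely every word
whose erasure is a Dyck word comes from a path, its heights being the running differences
`#U - #D`. A word of length `m` with a prescribed erasure of length `k` is determined by the
positions of its `k` non-flat letters, so there are `m.choose k` of them. Hence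
`M_{2n} = ∑ₖ C(2n, k) · #{Dyck words of length k} = ∑ᵢ C(2n, 2i) · Cat(i)`, and each term of the
stated sum is `(2n + 1) · C(2n, 2i) · Cat(i)` because `(2i)! = Cat(i) · i! · (i + 1)!`.
-/

open Finset DyckStep

namespace List

variable {α : Type*}

theorem count_reduceOption [DecidableEq α] (l : List (Option α)) (a : α) :
    l.reduceOption.count a = l.count (some a) := by
  induction l with
  | nil => rfl
  | cons x l ih => cases x <;> simp [reduceOption_cons_of_some, reduceOption_cons_of_none,
      count_cons, ih]

theorem forall_take_reduceOption_iff {Q : List α → Prop} {l : List (Option α)} :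
    (∀ i, Q (l.reduceOption.take i)) ↔ ∀ j, Q (l.take j).reduceOption := by
  refine ⟨fun h j => ?_, fun h i => ?_⟩
  · rw [prefix_iff_eq_take.1 ((take_prefix j l).reduceOption)]
    exact h _
  · obtain ⟨l₁, l₂, rfl, h₁, -⟩ :=
      (reduceOption_eq_append_iff l _ _).1 (take_append_drop i l.reduceOption).symm
    rw [← h₁, ← take_left (l₁ := l₁) (l₂ := l₂)]
    exact h _

def reduceOptionFiberConsEquiv (m : ℕ) (a : α) (w : List α) :
    {l : List (Option α) // l.length = m + 1 ∧ l.reduceOption = a :: w} ≃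
      {l : List (Option α) // l.length = m ∧ l.reduceOption = a :: w} ⊕
        {l : List (Option α) // l.length = m ∧ l.reduceOption = w} where
  toFun
    | ⟨none :: l, hl, hw⟩ => .inl ⟨l, by simpa using hl, by simpa using hw⟩
    | ⟨some _ :: l, hl, hw⟩ => .inr ⟨l, by simpa using hl, by simp_all⟩
  invFun
    | .inl ⟨l, hl, hw⟩ => ⟨none :: l, by simpa using hl, by simpa using hw⟩
    | .inr ⟨l, hl, hw⟩ => ⟨some a :: l, by simpa using hl, by simpa using hw⟩
  left_inv := by
    rintro ⟨_ | ⟨_ | b, l⟩, hl, hw⟩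
    · simp at hl
    · rfl
    · obtain rfl : b = a := by simp_all
      rfl
  right_inv := by rintro (⟨l, hl, hw⟩ | ⟨l, hl, hw⟩) <;> rfl

instance finite_length_eq_and [Finite α] (k : ℕ) (P : List α → Prop) :
    Finite {l : List α // l.length = k ∧ P l} :=
  ((finite_length_eq α k).subset fun _ hl => hl.1).to_subtype

theorem card_reduceOption_fiber_nil (m : ℕ) :
    Nat.card {l : List (Option α) // l.length = m ∧ l.reduceOption = []} = 1 := by
  have : Unique {l : List (Option α) // l.length = m ∧ l.reduceOption = []} :=
    { default := ⟨replicate m none, length_replicate, reduceOption_replicate_none⟩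
      uniq := by
        rintro ⟨l, rfl, hw⟩
        obtain ⟨k, rfl⟩ := (reduceOption_eq_nil_iff l).1 hw
        simp }
  exact Nat.card_unique

theorem card_reduceOption_fiber [Finite α] (m : ℕ) (w : List α) :
    Nat.card {l : List (Option α) // l.length = m ∧ l.reduceOption = w} = m.choose w.length := by
  induction m generalizing w with
  | zero =>
    rcases w with _ | ⟨a, w⟩
    · exact card_reduceOption_fiber_nil 0
    · have : IsEmpty {l : List (Option α) // l.length = 0 ∧ l.reduceOption = a :: w} :=
        ⟨fun ⟨l, hl, hw⟩ => by simp_all⟩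
      rw [Nat.card_of_isEmpty, length_cons, Nat.choose_zero_succ]
  | succ m ih =>
    rcases w with _ | ⟨a, w⟩
    · simp [card_reduceOption_fiber_nil]
    · rw [Nat.card_congr (reduceOptionFiberConsEquiv m a w), Nat.card_sum, ih, ih,
        length_cons, Nat.choose_succ_succ', add_comm]

theorem card_length_reduceOption [Finite α] (P : List α → Prop) (m : ℕ) :
    Nat.card {l : List (Option α) // l.length = m ∧ P l.reduceOption} =
      ∑ k ∈ Finset.range (m + 1), m.choose k * Nat.card {w : List α // w.length = k ∧ P w} := by
  let e : {l : List (Option α) // l.length = m ∧ P l.reduceOption} ≃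
      Σ (k : Fin (m + 1)) (w : {w : List α // w.length = k ∧ P w}),
        {l : List (Option α) // l.length = m ∧ l.reduceOption = w} :=
    { toFun := fun l => ⟨⟨l.1.reduceOption.length, by
          have := reduceOption_length_le l.1; omega⟩,
        ⟨_, rfl, l.2.2⟩, ⟨l, l.2.1, rfl⟩⟩
      invFun := fun x => ⟨x.2.2, x.2.2.2.1, by rw [x.2.2.2.2]; exact x.2.1.2.2⟩
      left_inv := fun _ => rfl
      right_inv := by
        intro ⟨⟨k, hk⟩, ⟨w, hwk, hw⟩, ⟨l, hl, hlw⟩⟩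
        cases hlw
        cases hwk
        rfl }
  rw [Nat.card_congr e, Nat.card_sigma, ← Fin.sum_univ_eq_sum_range]
  refine Fintype.sum_congr _ _ fun k => ?_
  have := Fintype.ofFinite {w : List α // w.length = k ∧ P w}
  simp only [Nat.card_sigma, card_reduceOption_fiber]
  rw [Fintype.sum_congr _ (fun _ => m.choose k) fun w => by rw [w.2.1], Finset.sum_const,
    Finset.card_univ, smul_eq_mul, Nat.card_eq_fintype_card, mul_comm]

end List

open List

instance : Finite DyckStep :=
  Finite.of_surjective (fun b : Bool => if b then U else D) fun s => by
    cases s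
    exacts [⟨true, rfl⟩, ⟨false, rfl⟩]

namespace DyckWord

theorem mem_range_toList_iff {w : List DyckStep} :
    w ∈ Set.range toList ↔
      w.count U = w.count D ∧ ∀ i, (w.take i).count D ≤ (w.take i).count U :=
  ⟨by rintro ⟨p, rfl⟩; exact ⟨p.count_U_eq_count_D, p.count_D_le_count_U⟩,
    fun h => ⟨⟨w, h.1, h.2⟩, rfl⟩⟩

theorem card_length_eq_two_mul (j : ℕ) :
    Nat.card {w : List DyckStep // w.length = 2 * j ∧ w ∈ Set.range toList} = catalan j := by
  rw [← card_dyckWord_semilength_eq_catalan, ← Nat.card_eq_fintype_card]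
  refine (Nat.card_eq_of_bijective
    (fun p => ⟨p.1.toList, by rw [← two_mul_semilength_eq_length, p.2], p.1, rfl⟩) ⟨?_, ?_⟩).symm
  · intro p q h
    exact Subtype.ext (DyckWord.ext (congrArg Subtype.val h))
  · rintro ⟨_, hw, p, rfl⟩
    refine ⟨⟨p, ?_⟩, rfl⟩
    have := p.two_mul_semilength_eq_length
    omega

theorem card_length_eq_two_mul_add_one (j : ℕ) :
    Nat.card {w : List DyckStep // w.length = 2 * j + 1 ∧ w ∈ Set.range toList} = 0 := by
  have : IsEmpty {w : List DyckStep // w.length = 2 * j + 1 ∧ w ∈ Set.range toList} := by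
    refine ⟨?_⟩
    rintro ⟨_, hw, p, rfl⟩
    have := p.two_mul_semilength_eq_length
    omega
  exact Nat.card_of_isEmpty

end DyckWord

namespace Motzkin

theorem reduceOption_mem_range_toList_iff {l : List (Option DyckStep)} :
    l.reduceOption ∈ Set.range DyckWord.toList ↔
      l.count (some U) = l.count (some D) ∧
        ∀ i, (l.take i).count (some D) ≤ (l.take i).count (some U) := by
  rw [DyckWord.mem_range_toList_iff,
    forall_take_reduceOption_iff (Q := fun u => u.count D ≤ u.count U)]
  simp only [count_reduceOption]

abbrev Path (m : ℕ) : Type :=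
  {p : Fin (m + 1) → ℕ // p 0 = 0 ∧ p (Fin.last m) = 0 ∧
    ∀ i : Fin m, p i.succ = p i.castSucc + 1 ∨ p i.succ = p i.castSucc ∨ p i.castSucc = p i.succ + 1}

abbrev Word (m : ℕ) : Type :=
  {l : List (Option DyckStep) // l.length = m ∧ l.reduceOption ∈ Set.range DyckWord.toList}

def stepOf (a b : ℕ) : Option DyckStep :=
  if b = a + 1 then some U else if a = b + 1 then some D else none

def height (l : List (Option DyckStep)) : ℕ :=
  l.count (some U) - l.count (some D)

theorem count_stepOf {a b : ℕ} (h : b = a + 1 ∨ b = a ∨ a = b + 1) :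
    [stepOf a b].count (some U) + a = [stepOf a b].count (some D) + b := by
  unfold stepOf
  split_ifs <;> simp <;> omega

theorem stepOf_height_take_succ {l : List (Option DyckStep)}
    (hl : ∀ j, (l.take j).count (some D) ≤ (l.take j).count (some U)) {i : ℕ}
    (hi : i < l.length) :
    stepOf (height (l.take i)) (height (l.take (i + 1))) = l[i] ∧
      (height (l.take (i + 1)) = height (l.take i) + 1 ∨
        height (l.take (i + 1)) = height (l.take i) ∨
        height (l.take i) = height (l.take (i + 1)) + 1) := by
  have ht := hl i
  have hts := hl (i + 1)
  rw [take_succ_eq_append_getElem hi] at hts ⊢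
  generalize l.take i = t at ht hts ⊢
  generalize l[i] = s at hts ⊢
  rcases s with _ | _ | _ <;> simp [height, stepOf] at hts ⊢
  · omega
  · rw [if_neg (by omega), if_pos (by omega)]
    exact ⟨rfl, by omega⟩

theorem count_take_ofFn_stepOf {m : ℕ} {p : Fin (m + 1) → ℕ}
    (hp : ∀ i : Fin m, p i.succ = p i.castSucc + 1 ∨ p i.succ = p i.castSucc ∨
      p i.castSucc = p i.succ + 1) (i : Fin (m + 1)) :
    let w := List.ofFn fun i : Fin m => stepOf (p i.castSucc) (p i.succ)
    (w.take i).count (some U) + p 0 = (w.take i).count (some D) + p i := by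
  induction i using Fin.induction with
  | zero => simp
  | succ i ih =>
    have := count_stepOf (hp i)
    simp only [Fin.val_succ, take_add_one, List.getElem?_ofFn, count_append] at ih ⊢
    simp [i.2] at ih ⊢
    omega

theorem reduceOption_ofFn_stepOf_mem_range {m : ℕ} {p : Fin (m + 1) → ℕ} (hp0 : p 0 = 0)
    (hpm : p (Fin.last m) = 0)
    (hp : ∀ i : Fin m, p i.succ = p i.castSucc + 1 ∨ p i.succ = p i.castSucc ∨
      p i.castSucc = p i.succ + 1) :
    (List.ofFn fun i : Fin m => stepOf (p i.castSucc) (p i.succ)).reduceOption ∈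
      Set.range DyckWord.toList := by
  have hcount := count_take_ofFn_stepOf hp
  set w := List.ofFn fun i : Fin m => stepOf (p i.castSucc) (p i.succ)
  have htake (j : ℕ) (hj : m ≤ j) : w.take j = w := take_of_length_le (by simpa [w] using hj)
  have hbalanced : w.count (some U) = w.count (some D) := by
    simpa [hp0, hpm, htake] using hcount (Fin.last m)
  rw [reduceOption_mem_range_toList_iff]
  refine ⟨hbalanced, fun j => ?_⟩
  rcases le_or_gt j m with hj | hj
  · have := hcount ⟨j, Nat.lt_succ_of_le hj⟩
    dsimp only at this
    omega
  · rw [htake j hj.le, hbalanced]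

def pathEquivWord (m : ℕ) : Path m ≃ Word m where
  toFun p := ⟨List.ofFn fun i : Fin m => stepOf (p.1 i.castSucc) (p.1 i.succ), length_ofFn,
    reduceOption_ofFn_stepOf_mem_range p.2.1 p.2.2.1 p.2.2.2⟩
  invFun l :=
    have hl := reduceOption_mem_range_toList_iff.1 l.2.2
    ⟨fun i => height (l.1.take i), by simp [height],
      by simp [take_of_length_le l.2.1.le, height, hl.1],
      fun i => (stepOf_height_take_succ hl.2 (by rw [l.2.1]; exact i.2)).2⟩
  left_inv p := by
    refine Subtype.ext (funext fun i => ?_)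
    have := count_take_ofFn_stepOf p.2.2.2 i
    simp only [p.2.1, add_zero] at this
    simp only [height]
    omega
  right_inv l := by
    have hl := (reduceOption_mem_range_toList_iff.1 l.2.2).2
    refine Subtype.ext (List.ext_getElem (by simp [l.2.1]) fun i hi _ => ?_)
    rw [List.getElem_ofFn]
    exact (stepOf_height_take_succ hl (by rw [l.2.1]; simpa using hi)).1

theorem card_path (m : ℕ) :
    Nat.card (Path m) = ∑ k ∈ range (m + 1),
      m.choose k * Nat.card {w : List DyckStep // w.length = k ∧ w ∈ Set.range DyckWord.toList} :=
  (Nat.card_congr (pathEquivWord m)).trans (card_length_reduceOption _ m)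

end Motzkin

open Nat in
theorem catalan_mul_factorial_mul_factorial (i : ℕ) : catalan i * (i ! * (i + 1)!) = (2 * i)! := by
  have h := choose_mul_factorial_mul_factorial (show i ≤ 2 * i by omega)
  rw [show 2 * i - i = i by omega, ← centralBinom_eq_two_mul_choose,
    ← succ_mul_catalan_eq_centralBinom] at h
  rw [← h, factorial_succ]
  ring

open Nat in
theorem factorial_div_eq_choose_mul_catalan {n i : ℕ} (hi : i ≤ n) :
    (2 * n + 1)! / ((2 * n - 2 * i)! * i ! * (i + 1)!) =
      (2 * n + 1) * ((2 * n).choose (2 * i) * catalan i) := by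
  refine Nat.div_eq_of_eq_mul_left (by positivity) ?_
  rw [factorial_succ, ← choose_mul_factorial_mul_factorial (show 2 * i ≤ 2 * n by omega),
    ← catalan_mul_factorial_mul_factorial]
  ring

theorem Finset.sum_range_two_mul_add_one_of_odd_eq_zero {M : Type*} [AddCommMonoid M] (f : ℕ → M)
    (hf : ∀ j, f (2 * j + 1) = 0) (n : ℕ) :
    ∑ k ∈ range (2 * n + 1), f k = ∑ j ∈ range (n + 1), f (2 * j) := by
  induction n with
  | zero => simp
  | succ n ih =>
    rw [show 2 * (n + 1) + 1 = 2 * n + 1 + 1 + 1 by ring, sum_range_succ, sum_range_succ, ih,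
      hf, add_zero, sum_range_succ (n := n + 1), show 2 * n + 1 + 1 = 2 * (n + 1) by ring]

open Motzkin in
theorem stmt7 (n : ℕ) :
    Nat.card {p : Fin (2 * n + 1) → ℕ //
        p 0 = 0 ∧ p (Fin.last (2 * n)) = 0 ∧
        ∀ i : Fin (2 * n), p i.succ = p i.castSucc + 1 ∨ p i.succ = p i.castSucc ∨
          p i.castSucc = p i.succ + 1} =
      (∑ i ∈ Finset.range (n + 1),
          (2 * n + 1).factorial /
            ((2 * n - 2 * i).factorial * i.factorial * (i + 1).factorial)) /
        (2 * n + 1) := by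
  rw [sum_congr rfl fun i hi => factorial_div_eq_choose_mul_catalan (by simp at hi; omega),
    ← mul_sum, Nat.mul_div_cancel_left _ (Nat.succ_pos _)]
  refine (card_path (2 * n)).trans ?_
  rw [sum_range_two_mul_add_one_of_odd_eq_zero _ fun j => by
    rw [DyckWord.card_length_eq_two_mul_add_one, mul_zero]]
  simp only [DyckWord.card_length_eq_two_mul]
end

section
/- For m ≥ 0 and n₁ ≥ m, the number of non-negative Motzkin-like paths of n₁ steps from height 0 to height m equals ((m+1)/(n₁+1)) · Σ_{i≥0} (n₁+1)! / ((n₁-2i-m)! · i! · (i+m+1)!), where the sum ranges over i with 2i + m ≤ n₁. -/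
/-!
Let `T n k` count the walks of `n` steps in `{-1, 0, 1}` from `0` to `k ∈ ℤ`. Nonnegative paths
obey the same three-term recurrence as `T`, so by induction and the symmetry `T n (-k) = T n k`
their number is `T n m - T n (m + 2)` (the reflection principle). Comparing coefficients of `x^k`
in `x d/dx (x⁻¹ + 1 + x)^(n+1) = (n + 1) (x - x⁻¹) (x⁻¹ + 1 + x)^n` gives
`k T (n+1) k = (n + 1) (T n (k - 1) - T n (k + 1))`, hence `(m + 1) T (n+1) (m+1) = (n + 1) N n m`
for the number `N n m` of nonnegative paths, and `T (n+1) (m+1)` is the trinomial sum.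
-/

open Finset Nat

def intChoose (a : ℕ) (b : ℤ) : ℕ := if 0 ≤ b then a.choose b.toNat else 0

lemma intChoose_succ (a : ℕ) (b : ℤ) :
    intChoose (a + 1) b = intChoose a b + intChoose a (b - 1) := by
  unfold intChoose
  split_ifs
  · rw [show b.toNat = (b - 1).toNat + 1 by omega, choose_succ_succ', add_comm]
  · simp [show b = 0 by omega]
  · omega
  · rfl

@[simp]
lemma intChoose_natCast (a b : ℕ) : intChoose a b = a.choose b := by
  simp [intChoose]

-- `i` down-steps and `i + k` up-steps among `n` steps
def trinomial (n : ℕ) (k : ℤ) : ℕ :=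
  ∑ i ∈ range (n + 1), n.choose i * intChoose (n - i) (i + k)

lemma trinomial_zero (k : ℤ) : trinomial 0 k = if k = 0 then 1 else 0 := by
  rcases lt_trichotomy k 0 with hk | rfl | hk
  · simp [trinomial, intChoose, hk.ne, hk.not_ge]
  · simp [trinomial, intChoose]
  · simp [trinomial, intChoose, hk.ne', hk.le, choose_eq_zero_of_lt (show 0 < k.toNat by omega)]

lemma trinomial_succ (n : ℕ) (k : ℤ) :
    trinomial (n + 1) k = trinomial n (k - 1) + trinomial n k + trinomial n (k + 1) := by
  set g : ℕ → ℕ := fun i => n.choose (i + 1) * intChoose (n - i) ((i + 1 : ℕ) + k)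
  have choose_pascal : trinomial (n + 1) k =
      intChoose (n + 1) k + (∑ i ∈ range (n + 1), g i + trinomial n (k + 1)) := by
    rw [trinomial, sum_range_succ', trinomial, ← sum_add_distrib, add_comm]
    congr 1
    · simp
    · refine sum_congr rfl fun i _ => ?_
      rw [choose_succ_succ', Nat.add_sub_add_right, add_mul, add_comm,
        show (i : ℤ) + (k + 1) = (i + 1 : ℕ) + k by push_cast; ring]
  have intChoose_pascal : intChoose (n + 1) k + ∑ i ∈ range (n + 1), g i =
      trinomial n (k - 1) + trinomial n k := by
    calc intChoose (n + 1) k + ∑ i ∈ range (n + 1), g i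
        = ∑ i ∈ range (n + 2), n.choose i * intChoose (n + 1 - i) (i + k) := by
          rw [sum_range_succ' (fun i => n.choose i * intChoose (n + 1 - i) (i + k)), add_comm]
          simp [g]
      _ = ∑ i ∈ range (n + 1), n.choose i * intChoose (n + 1 - i) (i + k) := by
          rw [sum_range_succ, choose_succ_self, zero_mul, add_zero]
      _ = trinomial n (k - 1) + trinomial n k := by
          rw [trinomial, trinomial, ← sum_add_distrib]
          refine sum_congr rfl fun i hi => ?_
          rw [show n + 1 - i = n - i + 1 by grind, intChoose_succ, add_sub_assoc]
          ring
  rw [choose_pascal, ← add_assoc, intChoose_pascal]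

lemma trinomial_neg (n : ℕ) (k : ℤ) : trinomial n (-k) = trinomial n k := by
  induction n generalizing k with
  | zero => simp [trinomial_zero]
  | succ n ih =>
    rw [trinomial_succ, trinomial_succ, show -k - 1 = -(k + 1) by ring,
      show -k + 1 = -(k - 1) by ring, ih, ih, ih]
    ring

lemma mul_trinomial_succ (n : ℕ) (k : ℤ) :
    k * trinomial (n + 1) k = (n + 1) * ((trinomial n (k - 1) : ℤ) - trinomial n (k + 1)) := by
  induction n generalizing k with
  | zero =>
    rw [trinomial_succ]
    simp only [trinomial_zero]
    split_ifs <;> push_cast <;> omega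
  | succ n ih =>
    have h₁ := ih (k - 1)
    have h₂ := ih (k + 1)
    have r₁ := congrArg (Nat.cast : ℕ → ℤ) (trinomial_succ n (k - 1))
    have r₂ := congrArg (Nat.cast : ℕ → ℤ) (trinomial_succ n (k + 1))
    push_cast at r₁ r₂
    rw [sub_add_cancel] at h₁ r₁
    rw [add_sub_cancel_right] at h₂ r₂
    rw [trinomial_succ (n + 1)]
    push_cast
    linear_combination h₁ + ih k + h₂ + ((n : ℤ) + 1) * (r₂ - r₁)

lemma factorial_div_factorial_mul_factorial_mul_factorial {a b c N : ℕ} (h : a + b + c = N) :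
    N ! / (a ! * b ! * c !) = N.choose b * (N - b).choose c := by
  have hb := choose_mul_factorial_mul_factorial (show b ≤ N by omega)
  have hc := choose_mul_factorial_mul_factorial (show c ≤ N - b by omega)
  rw [show N - b - c = a by omega] at hc
  refine Nat.div_eq_of_eq_mul_left (by positivity) ?_
  rw [← hb, ← hc]
  ring

lemma trinomial_succ_eq_sum_factorial (n m : ℕ) :
    trinomial (n + 1) (m + 1) = ∑ i ∈ range ((n - m) / 2 + 1),
      (n + 1)! / ((n - 2 * i - m)! * i ! * (i + m + 1)!) := by
  have term : ∀ i ∈ range ((n - m) / 2 + 1),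
      (n + 1)! / ((n - 2 * i - m)! * i ! * (i + m + 1)!) =
        (n + 1).choose i * intChoose (n + 1 - i) (i + (m + 1)) := by
    intro i hi
    rw [show (i : ℤ) + (m + 1) = (i + m + 1 : ℕ) by push_cast; ring, intChoose_natCast]
    by_cases h : 2 * i + m ≤ n
    · exact factorial_div_factorial_mul_factorial_mul_factorial (by omega)
    · -- only `i = 0` with `n < m` lands here, and both sides vanish
      obtain rfl : i = 0 := by grind
      have hnm : (n + 1)! < (m + 1)! := (factorial_lt n.succ_pos).2 (by omega)
      rw [choose_eq_zero_of_lt (n := n + 1 - 0) (by omega), mul_zero, show n - 0 - m = 0 by omega]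
      exact div_eq_of_lt (by simpa using hnm)
  rw [sum_congr rfl term, trinomial]
  refine (sum_subset (range_subset_range.2 (by omega)) fun i _ hi => ?_).symm
  rw [show (i : ℤ) + (m + 1) = (i + m + 1 : ℕ) by push_cast; ring, intChoose_natCast,
    choose_eq_zero_of_lt (n := n + 1 - i) (by rw [mem_range] at hi; omega), mul_zero]

def MotzkinStep (a b : ℕ) : Prop := b = a + 1 ∨ b = a ∨ a = b + 1

def IsMotzkinPath (n m : ℕ) (p : Fin (n + 1) → ℕ) : Prop :=
  p 0 = 0 ∧ p (Fin.last n) = m ∧ ∀ i : Fin n, MotzkinStep (p i.castSucc) (p i.succ)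

noncomputable def motzkinCount (n m : ℕ) : ℕ := Nat.card {p // IsMotzkinPath n m p}

namespace IsMotzkinPath

variable {n m : ℕ}

lemma le_val {p : Fin (n + 1) → ℕ} (hp : IsMotzkinPath n m p) (i : Fin (n + 1)) :
    p i ≤ i := by
  induction i using Fin.induction with
  | zero => simp [hp.1]
  | succ i ih =>
    have := hp.2.2 i
    simp only [MotzkinStep, Fin.val_succ, Fin.val_castSucc] at this ih ⊢
    omega

instance : Finite {p // IsMotzkinPath n m p} :=
  Finite.of_injective
    (fun p i => (⟨p.1 i, lt_succ_of_le ((p.2.le_val i).trans i.is_le)⟩ : Fin (n + 1)))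
    fun _ _ h => Subtype.ext <| funext fun i => congrArg Fin.val (congrFun h i)

lemma init {p : Fin (n + 2) → ℕ} (hp : IsMotzkinPath (n + 1) m p) :
    IsMotzkinPath n (p (Fin.last n).castSucc) (Fin.init p) :=
  ⟨hp.1, rfl, fun i => by simpa [Fin.init] using hp.2.2 i.castSucc⟩

lemma motzkinStep_last {p : Fin (n + 2) → ℕ} (hp : IsMotzkinPath (n + 1) m p) :
    MotzkinStep (p (Fin.last n).castSucc) m := by
  simpa [hp.2.1] using hp.2.2 (Fin.last n)

lemma snoc {q : Fin (n + 1) → ℕ} {j : ℕ} (hq : IsMotzkinPath n j q) (h : MotzkinStep j m) :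
    IsMotzkinPath (n + 1) m (Fin.snoc q m) := by
  refine ⟨by rw [← Fin.castSucc_zero, Fin.snoc_castSucc, hq.1], by simp, fun i => ?_⟩
  induction i using Fin.lastCases with
  | last => rwa [Fin.succ_last, Fin.snoc_last, Fin.snoc_castSucc, hq.2.1]
  | cast i => rw [Fin.succ_castSucc, Fin.snoc_castSucc, Fin.snoc_castSucc]; exact hq.2.2 i

end IsMotzkinPath

def motzkinPathSnocEquiv (n m : ℕ) (s : Finset ℕ) (hs : ∀ j, j ∈ s ↔ MotzkinStep j m) :
    {p // IsMotzkinPath (n + 1) m p} ≃ Σ j : s, {q // IsMotzkinPath n j q} where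
  toFun p := ⟨⟨_, (hs _).2 p.2.motzkinStep_last⟩, ⟨_, p.2.init⟩⟩
  invFun q := ⟨Fin.snoc q.2.1 m, q.2.2.snoc ((hs _).1 q.1.2)⟩
  left_inv p := Subtype.ext <| by simpa [p.2.2.1] using Fin.snoc_init_self p.1
  right_inv q := Sigma.subtype_ext (Subtype.ext <| by simpa using q.2.2.2.1) (by simp)

lemma motzkinCount_succ (n m : ℕ) (s : Finset ℕ) (hs : ∀ j, j ∈ s ↔ MotzkinStep j m) :
    motzkinCount (n + 1) m = ∑ j ∈ s, motzkinCount n j := by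
  rw [motzkinCount, Nat.card_congr (motzkinPathSnocEquiv n m s hs), Nat.card_sigma,
    ← sum_coe_sort s]
  rfl

lemma motzkinCount_zero (m : ℕ) : motzkinCount 0 m = if m = 0 then 1 else 0 := by
  split_ifs with h
  · subst h
    exact Nat.card_eq_one_iff_exists.2 ⟨⟨0, rfl, rfl, fun i => i.elim0⟩,
      fun p => Subtype.ext <| funext fun i => by simpa [Fin.fin_one_eq_zero i] using p.2.1⟩
  · exact Nat.card_eq_zero.2 (.inl ⟨fun p => h (p.2.2.1 ▸ p.2.1)⟩)

lemma motzkinCount_succ_zero (n : ℕ) :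
    motzkinCount (n + 1) 0 = motzkinCount n 0 + motzkinCount n 1 := by
  rw [motzkinCount_succ n 0 {0, 1}
      (fun _ => by simp only [mem_insert, mem_singleton, MotzkinStep]; omega),
    sum_pair zero_ne_one]

lemma motzkinCount_succ_succ (n m : ℕ) : motzkinCount (n + 1) (m + 1) =
    motzkinCount n m + motzkinCount n (m + 1) + motzkinCount n (m + 2) := by
  rw [motzkinCount_succ n (m + 1) {m, m + 1, m + 2}
      (fun _ => by simp only [mem_insert, mem_singleton, MotzkinStep]; omega),
    sum_insert (by simp), sum_pair (by simp), add_assoc]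

lemma motzkinCount_eq_trinomial_sub (n m : ℕ) :
    (motzkinCount n m : ℤ) = trinomial n m - trinomial n (m + 2) := by
  induction n generalizing m with
  | zero =>
    rw [motzkinCount_zero, trinomial_zero, trinomial_zero]
    split_ifs <;> push_cast <;> omega
  | succ n ih =>
    cases m with
    | zero =>
      rw [motzkinCount_succ_zero, trinomial_succ, trinomial_succ]
      push_cast
      rw [ih 0, ih 1]
      push_cast
      rw [trinomial_neg]
      ring
    | succ m =>
      rw [motzkinCount_succ_succ, trinomial_succ, trinomial_succ]
      push_cast
      rw [ih m, ih (m + 1), ih (m + 2)]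
      push_cast
      ring_nf

lemma succ_mul_motzkinCount (n m : ℕ) :
    (n + 1) * motzkinCount n m = (m + 1) * trinomial (n + 1) (m + 1) := by
  have := mul_trinomial_succ n (m + 1)
  rw [add_sub_cancel_right, add_assoc, one_add_one_eq_two,
    ← motzkinCount_eq_trinomial_sub] at this
  exact_mod_cast this.symm

theorem stmt8_general (n₁ m : ℕ) :
    Nat.card {p : Fin (n₁ + 1) → ℕ //
        p 0 = 0 ∧ p (Fin.last n₁) = m ∧
        ∀ i : Fin n₁, p i.succ = p i.castSucc + 1 ∨ p i.succ = p i.castSucc ∨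
          p i.castSucc = p i.succ + 1} =
      (m + 1) *
          (∑ i ∈ Finset.range ((n₁ - m) / 2 + 1),
            (n₁ + 1).factorial /
              ((n₁ - 2 * i - m).factorial * i.factorial * (i + m + 1).factorial)) /
        (n₁ + 1) := by
  change motzkinCount n₁ m = _
  rw [← trinomial_succ_eq_sum_factorial, ← succ_mul_motzkinCount,
    Nat.mul_div_cancel_left _ n₁.succ_pos]

theorem stmt8 (n₁ m : ℕ) (hm : m ≤ n₁) :
    Nat.card {p : Fin (n₁ + 1) → ℕ //
        p 0 = 0 ∧ p (Fin.last n₁) = m ∧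
        ∀ i : Fin n₁, p i.succ = p i.castSucc + 1 ∨ p i.succ = p i.castSucc ∨
          p i.castSucc = p i.succ + 1} =
      (m + 1) *
          (∑ i ∈ Finset.range ((n₁ - m) / 2 + 1),
            (n₁ + 1).factorial /
              ((n₁ - 2 * i - m).factorial * i.factorial * (i + m + 1).factorial)) /
        (n₁ + 1) :=
  stmt8_general n₁ m
end

section
/- Every Motzkin walk of length 2n (viewed as a basis state of (ℂ³)^{⊗2n}) is annihilated by each local projector Π_{j,j+1} summand of the Motzkin Hamiltonian and by the boundary projector; hence the Motzkin state is a frustration-free zero-energy ground state: H|M_{2n}⟩ = 0 with each term ⟨M_{2n}|Π|M_{2n}⟩ = 0. -/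
/-! A local move `0d ↔ d0`, `0u ↔ u0` or `00 ↔ ud` on sites `j, j+1` preserves the total spin of
the pair, so it changes no height of the walk except the one between the two sites. That height
is the height before the pair plus the first step, and as long as the pair is not a valley `du`
it is at least the smaller of the heights before and after the pair. Hence such moves map
Motzkin walks to Motzkin walks, the Motzkin state has equal amplitudes on both sides of each
move and is orthogonal to `|D⟩`, `|U⟩`, `|φ⟩` on every pair of sites. A Motzkin walk can neither
start with `d` nor end with `u`, which settles the boundary term. -/

/-- Basis configurations of a chain of `N` spin-1 particles; the single-site basis
`Fin 3` codes `0 ↦ |u⟩ = |+1⟩`, `1 ↦ |0⟩`, `2 ↦ |d⟩ = |-1⟩`. -/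
abbrev Cfg (N : ℕ) := Fin N → Fin 3

/-- The `s^z` eigenvalue of each single-site basis state. -/
def spinval : Fin 3 → ℤ := ![1, 0, -1]

/-- `|D⟩ = (|0d⟩ - |d0⟩)/√2` as a vector on a pair of sites. -/
noncomputable def vD : Fin 3 × Fin 3 → ℂ := fun p =>
  ((if p = (1, 2) then 1 else 0) - (if p = (2, 1) then 1 else 0)) / (Real.sqrt 2 : ℝ)

/-- `|U⟩ = (|0u⟩ - |u0⟩)/√2` as a vector on a pair of sites. -/
noncomputable def vU : Fin 3 × Fin 3 → ℂ := fun p =>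
  ((if p = (1, 0) then 1 else 0) - (if p = (0, 1) then 1 else 0)) / (Real.sqrt 2 : ℝ)

/-- `|φ⟩ = (|00⟩ - |ud⟩)/√2` as a vector on a pair of sites. -/
noncomputable def vPhi : Fin 3 × Fin 3 → ℂ := fun p =>
  ((if p = (1, 1) then 1 else 0) - (if p = (0, 2) then 1 else 0)) / (Real.sqrt 2 : ℝ)

/-- The local projector `Π = |D⟩⟨D| + |U⟩⟨U| + |φ⟩⟨φ|` on two neighboring sites. -/
noncomputable def localProj : Matrix (Fin 3 × Fin 3) (Fin 3 × Fin 3) ℂ :=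
  Matrix.vecMulVec vD (star vD) + Matrix.vecMulVec vU (star vU) +
    Matrix.vecMulVec vPhi (star vPhi)

/-- The projector `Π_{j,j+1}` acting on sites `j, j+1` of the chain and trivially
elsewhere (used only for `j` with `j + 1 < N`). -/
noncomputable def pairEmbed (N : ℕ) (j : ℕ) (hj : j + 1 < N) :
    Matrix (Cfg N) (Cfg N) ℂ :=
  fun x y =>
    (if ∀ k : Fin N, (k : ℕ) ≠ j → (k : ℕ) ≠ j + 1 → x k = y k then 1 else 0) *
      localProj (x ⟨j, by omega⟩, x ⟨j + 1, hj⟩) (y ⟨j, by omega⟩, y ⟨j + 1, hj⟩)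

/-- The boundary projector `Π_boundary = |d⟩₁⟨d| + |u⟩_N⟨u|`. -/
def boundaryProj (N : ℕ) (hN : 0 < N) : Matrix (Cfg N) (Cfg N) ℂ :=
  fun x y =>
    (if x = y ∧ x ⟨0, hN⟩ = 2 then 1 else 0) +
      (if x = y ∧ x ⟨N - 1, by omega⟩ = 0 then 1 else 0)

/-- The Motzkin Hamiltonian `H = ∑_{j=1}^{N-1} Π_{j,j+1} + Π_boundary`. -/
noncomputable def motzkinH (N : ℕ) (hN : 0 < N) : Matrix (Cfg N) (Cfg N) ℂ :=
  (∑ j ∈ (Finset.range (N - 1)).attach,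
      pairEmbed N j (by have := j.2; simp only [Finset.mem_range] at this; omega)) +
    boundaryProj N hN

/-- A configuration is a Motzkin walk: every prefix has at least as many `u`'s as
`d`'s (non-negative partial sums of `s^z` values) and the totals are balanced. -/
def IsMotzkin (N : ℕ) (x : Cfg N) : Prop :=
  (∀ k ∈ Finset.range (N + 1),
      0 ≤ ∑ j ∈ Finset.univ.filter (fun j : Fin N => (j : ℕ) < k), spinval (x j)) ∧
  ∑ j, spinval (x j) = 0

open scoped Classical in
/-- The (unnormalized) Motzkin state: the uniform superposition of all Motzkin walks. -/
noncomputable def motzkinVec (N : ℕ) : Cfg N → ℂ := fun x =>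
  if IsMotzkin N x then 1 else 0

open Matrix Function

theorem sum_eq_sum_of_eq_off_pair {ι M : Type*} [AddCommGroup M] {f g : ι → M} {p q : ι}
    {s : Finset ι} (hpq : p ≠ q) (hfg : ∀ i, i ≠ p → i ≠ q → f i = g i)
    (hsum : f p + f q = g p + g q) (hs : p ∈ s ↔ q ∈ s) :
    ∑ i ∈ s, f i = ∑ i ∈ s, g i := by
  by_cases hp : p ∈ s
  · rw [← sub_eq_zero, ← Finset.sum_sub_distrib,
      Finset.sum_eq_add_of_mem p q hp (hs.1 hp) hpq fun i _ hi => by rw [hfg i hi.1 hi.2, sub_self],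
      sub_add_sub_comm, hsum, sub_self]
  · exact Finset.sum_congr rfl fun i hi =>
      hfg i (ne_of_mem_of_not_mem hi hp) (ne_of_mem_of_not_mem hi (mt hs.2 hp))

section MotzkinWalks

variable {N : ℕ}

def walkHeight (x : Cfg N) (k : ℕ) : ℤ :=
  ∑ i ∈ Finset.univ.filter (fun i : Fin N => (i : ℕ) < k), spinval (x i)

theorem walkHeight_succ (x : Cfg N) {k : ℕ} (hk : k < N) :
    walkHeight x (k + 1) = walkHeight x k + spinval (x ⟨k, hk⟩) := by
  have : Finset.univ.filter (fun i : Fin N => (i : ℕ) < k + 1) =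
      insert ⟨k, hk⟩ (Finset.univ.filter fun i : Fin N => (i : ℕ) < k) := by
    ext i
    simp only [Finset.mem_filter, Finset.mem_univ, true_and, Finset.mem_insert, Fin.ext_iff]
    omega
  rw [walkHeight, this, Finset.sum_insert (by simp), add_comm]
  rfl

theorem IsMotzkin.walkHeight_nonneg {x : Cfg N} (hx : IsMotzkin N x) {k : ℕ} (hk : k ≤ N) :
    0 ≤ walkHeight x k :=
  hx.1 k (Finset.mem_range.2 (Nat.lt_succ_of_le hk))

theorem IsMotzkin.walkHeight_eq_zero {x : Cfg N} (hx : IsMotzkin N x) : walkHeight x N = 0 := by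
  rw [walkHeight, Finset.filter_true_of_mem fun i _ => i.isLt]
  exact hx.2

theorem min_le_spinval_of_not_valley {a b : Fin 3} (h : ¬(a = 2 ∧ b = 0)) :
    min 0 (spinval a + spinval b) ≤ spinval a := by
  revert a b
  decide

theorem IsMotzkin.of_eq_off_pair {j : ℕ} (hj : j + 1 < N) {x y : Cfg N}
    (hxy : ∀ i : Fin N, (i : ℕ) ≠ j → (i : ℕ) ≠ j + 1 → x i = y i)
    (hsum : spinval (x ⟨j, by omega⟩) + spinval (x ⟨j + 1, hj⟩) =
      spinval (y ⟨j, by omega⟩) + spinval (y ⟨j + 1, hj⟩))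
    (hy : ¬(y ⟨j, by omega⟩ = 2 ∧ y ⟨j + 1, hj⟩ = 0)) (hx : IsMotzkin N x) :
    IsMotzkin N y := by
  have hpq : (⟨j, by omega⟩ : Fin N) ≠ ⟨j + 1, hj⟩ := by simp
  have hfg : ∀ i : Fin N, i ≠ ⟨j, by omega⟩ → i ≠ ⟨j + 1, hj⟩ →
      spinval (x i) = spinval (y i) := fun i hi hi' =>
    congrArg spinval (hxy i (fun h => hi (Fin.ext h)) fun h => hi' (Fin.ext h))
  have hheight : ∀ k ≠ j + 1, walkHeight x k = walkHeight y k := fun k hk =>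
    sum_eq_sum_of_eq_off_pair hpq hfg hsum (by simp; omega)
  refine ⟨fun k hk => ?_, ?_⟩
  · rcases eq_or_ne k (j + 1) with rfl | hk'
    · have h₀ := hx.walkHeight_nonneg (k := j) (by omega)
      have h₂ := hx.walkHeight_nonneg (k := j + 2) (by omega)
      rw [hheight j (by omega)] at h₀
      rw [hheight (j + 2) (by omega), walkHeight_succ y hj, walkHeight_succ y (by omega)] at h₂
      have hstep := min_le_spinval_of_not_valley hy
      show 0 ≤ walkHeight y (j + 1)
      rw [walkHeight_succ y (by omega)]
      omega
    · show 0 ≤ walkHeight y k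
      rw [← hheight k hk']
      exact hx.1 k hk
  · rw [← sum_eq_sum_of_eq_off_pair hpq hfg hsum (by simp)]
    exact hx.2

theorem isMotzkin_update_pair_iff {j : ℕ} (hj : j + 1 < N) (x : Cfg N) {a b a' b' : Fin 3}
    (hsum : spinval a + spinval b = spinval a' + spinval b')
    (hab : ¬(a = 2 ∧ b = 0)) (hab' : ¬(a' = 2 ∧ b' = 0)) :
    IsMotzkin N (update (update x ⟨j, by omega⟩ a) ⟨j + 1, hj⟩ b) ↔
      IsMotzkin N (update (update x ⟨j, by omega⟩ a') ⟨j + 1, hj⟩ b') := by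
  constructor <;> refine IsMotzkin.of_eq_off_pair hj
    (fun i hi hi' => by simp [Fin.ext_iff, hi, hi']) ?_ ?_
  all_goals simp_all

theorem star_dotProduct_of_sub_single {ι : Type*} [Fintype ι] [DecidableEq ι] (a b : ι) (c : ℝ)
    (f : ι → ℂ) :
    star (fun p => ((if p = a then 1 else 0) - (if p = b then 1 else 0)) / (c : ℂ)) ⬝ᵥ f =
      (f a - f b) / c := by
  simp [dotProduct, sub_mul, div_mul_eq_mul_div, Finset.sum_sub_distrib, ← Finset.sum_div]

theorem localProj_mulVec_eq_zero {f : Fin 3 × Fin 3 → ℂ} (hD : f (1, 2) = f (2, 1))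
    (hU : f (1, 0) = f (0, 1)) (hPhi : f (1, 1) = f (0, 2)) : localProj *ᵥ f = 0 := by
  have hD' : star vD ⬝ᵥ f = 0 :=
    (star_dotProduct_of_sub_single _ _ _ f).trans (by rw [hD, sub_self, zero_div])
  have hU' : star vU ⬝ᵥ f = 0 :=
    (star_dotProduct_of_sub_single _ _ _ f).trans (by rw [hU, sub_self, zero_div])
  have hPhi' : star vPhi ⬝ᵥ f = 0 :=
    (star_dotProduct_of_sub_single _ _ _ f).trans (by rw [hPhi, sub_self, zero_div])
  simp [localProj, add_mulVec, vecMulVec_mulVec, hD', hU', hPhi']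

theorem pairEmbed_mulVec_apply {j : ℕ} (hj : j + 1 < N) (v : Cfg N → ℂ) (x : Cfg N) :
    (pairEmbed N j hj *ᵥ v) x =
      (localProj *ᵥ fun p => v (update (update x ⟨j, by omega⟩ p.1) ⟨j + 1, hj⟩ p.2))
        (x ⟨j, by omega⟩, x ⟨j + 1, hj⟩) := by
  have hne : (⟨j, by omega⟩ : Fin N) ≠ ⟨j + 1, hj⟩ := by simp
  set e : Fin 3 × Fin 3 → Cfg N := fun p => update (update x ⟨j, by omega⟩ p.1) ⟨j + 1, hj⟩ p.2
  have he : Injective e := fun p q hpq => Prod.ext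
    (by simpa [e, update_of_ne hne] using congrFun hpq ⟨j, by omega⟩)
    (by simpa [e] using congrFun hpq ⟨j + 1, hj⟩)
  show ∑ y, pairEmbed N j hj x y * v y = ∑ p, localProj _ p * v (e p)
  refine (Fintype.sum_of_injective e he _ _ (fun y hy => ?_) fun p => ?_).symm
  · have hoff : ¬∀ i : Fin N, (i : ℕ) ≠ j → (i : ℕ) ≠ j + 1 → x i = y i := fun hxy =>
      hy ⟨(y ⟨j, by omega⟩, y ⟨j + 1, hj⟩), funext fun i => by
        by_cases h : (i : ℕ) = j
        · rw [show i = ⟨j, by omega⟩ from Fin.ext h]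
          simp [e]
        by_cases h' : (i : ℕ) = j + 1
        · rw [show i = ⟨j + 1, hj⟩ from Fin.ext h']
          simp [e]
        simp [e, Fin.ext_iff, h, h', hxy i h h']⟩
    simp [pairEmbed, hoff]
  · have hxe : ∀ i : Fin N, (i : ℕ) ≠ j → (i : ℕ) ≠ j + 1 → x i = e p i := fun i h h' => by
      simp [e, Fin.ext_iff, h, h']
    have hep : (e p ⟨j, by omega⟩, e p ⟨j + 1, hj⟩) = p := by simp [e]
    simp only [pairEmbed, if_pos hxe, one_mul, hep]

theorem pairEmbed_mulVec_motzkinVec {j : ℕ} (hj : j + 1 < N) :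
    pairEmbed N j hj *ᵥ motzkinVec N = 0 := by
  funext x
  have hmove : ∀ {a b a' b' : Fin 3}, spinval a + spinval b = spinval a' + spinval b' →
      ¬(a = 2 ∧ b = 0) → ¬(a' = 2 ∧ b' = 0) →
      motzkinVec N (update (update x ⟨j, by omega⟩ a) ⟨j + 1, hj⟩ b) =
        motzkinVec N (update (update x ⟨j, by omega⟩ a') ⟨j + 1, hj⟩ b') :=
    fun hsum hab hab' => by
      classical
      exact if_congr (isMotzkin_update_pair_iff hj x hsum hab hab') rfl rfl
  rw [pairEmbed_mulVec_apply, localProj_mulVec_eq_zero]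
  · rfl
  all_goals exact hmove (by decide) (by decide) (by decide)

theorem IsMotzkin.head_ne_down {x : Cfg N} (hx : IsMotzkin N x) (hN : 0 < N) :
    x ⟨0, hN⟩ ≠ 2 := fun h => by
  have h₁ := hx.walkHeight_nonneg (k := 1) hN
  rw [walkHeight_succ x hN, h] at h₁
  simp [walkHeight, spinval] at h₁

theorem IsMotzkin.last_ne_up {x : Cfg N} (hx : IsMotzkin N x) (hN : 0 < N) :
    x ⟨N - 1, by omega⟩ ≠ 0 := fun h => by
  have hlast := walkHeight_succ x (k := N - 1) (by omega)
  rw [Nat.sub_add_cancel hN, hx.walkHeight_eq_zero, h] at hlast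
  have := hx.walkHeight_nonneg (k := N - 1) (by omega)
  simp [spinval] at hlast
  omega

theorem boundaryProj_eq_diagonal (hN : 0 < N) :
    boundaryProj N hN = diagonal fun x =>
      (if x ⟨0, hN⟩ = 2 then 1 else 0) + (if x ⟨N - 1, by omega⟩ = 0 then 1 else 0) := by
  ext x y
  by_cases h : x = y <;> simp [boundaryProj, diagonal, h]

theorem boundaryProj_mulVec_motzkinVec (hN : 0 < N) :
    boundaryProj N hN *ᵥ motzkinVec N = 0 := by
  funext x
  rw [boundaryProj_eq_diagonal, mulVec_diagonal]
  by_cases hx : IsMotzkin N x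
  · simp [hx.head_ne_down hN, hx.last_ne_up hN]
  · simp [motzkinVec, hx]

end MotzkinWalks

/-- Every local projector `Π_{j,j+1}` and the boundary projector annihilate the
Motzkin state, hence the Motzkin state is a frustration-free zero-energy ground
state: `H |M⟩ = 0` with each term contributing zero energy. -/
theorem stmt12 (n : ℕ) (hn : 0 < n) :
    (∀ (j : ℕ) (hj : j + 1 < 2 * n),
        Matrix.mulVec (pairEmbed (2 * n) j hj) (motzkinVec (2 * n)) = 0) ∧
    Matrix.mulVec (boundaryProj (2 * n) (by omega)) (motzkinVec (2 * n)) = 0 ∧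
    Matrix.mulVec (motzkinH (2 * n) (by omega)) (motzkinVec (2 * n)) = 0 := by
  refine ⟨fun j hj => pairEmbed_mulVec_motzkinVec hj, boundaryProj_mulVec_motzkinVec _, ?_⟩
  rw [motzkinH, add_mulVec, sum_mulVec, boundaryProj_mulVec_motzkinVec, add_zero]
  exact Finset.sum_eq_zero fun j _ => pairEmbed_mulVec_motzkinVec _
end
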